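/- Let p be an odd prime, X a finite set with |X| = p², and N a regular subgroup of Sym(X) which is cyclic of order p². Then every transitive subgroup of the normalizer of N in Sym(X) contains an element of order p². (Equivalently: every transitive subgroup of the holomorph Hol(C_{p²}), viewed inside S_{p²}, contains an element of order p².) -/

import Mathlib

/-- A subgroup `N` of the symmetric group on `X` is *regular* if it acts simply
transitively on `X`, i.e. it is transitive and `|N| = |X|`. -/
def IsRegularSubgroup {X : Type*} (N : Subgroup (Equiv.Perm X)) : Prop :=
  (∀ x y : X, ∃ n ∈ N, n x = y) ∧ Nat.card ↥N = Nat.card X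

/-!
Suppose `H` has no element of order `p²`, and let `n` generate `N`. A Sylow `p`-subgroup of `H`
is still transitive on the `p²` points, and all its elements satisfy `σ ^ p = 1`; so some such
`σ` moves a point `x` to `n x`. Since `σ` normalizes `N`, `σ n σ⁻¹ = n ^ s`, and then
`σ ^ j x = n ^ (1 + s + ⋯ + s ^ (j - 1)) x`. Now `σ ^ p = 1` forces `s ^ p ≡ 1 [MOD p²]`, hence
`s ≡ 1 [MOD p]`, and for odd `p` this gives `1 + s + ⋯ + s ^ (p - 1) ≡ p [MOD p²]`. So `n ^ p`
fixes `x`, which is impossible in the regular group `N` of order `p²`.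
-/

open Finset MulAction

theorem Nat.geom_sum_modEq_of_modEq_one {p s : ℕ} (hp : Odd p) (hs : s ≡ 1 [MOD p]) :
    ∑ i ∈ range p, s ^ i ≡ p [MOD p ^ 2] := by
  obtain ⟨b, hb⟩ : (p : ℤ) ∣ s - 1 := Nat.modEq_iff_dvd.mp hs.symm
  have key := odd_sq_dvd_geom_sum₂_sub (R := ℤ) 1 b hp
  simp only [one_pow, mul_one, ← hb, add_sub_cancel] at key
  refine Nat.modEq_iff_dvd.mpr ?_
  push_cast
  exact dvd_sub_comm.mp key

theorem Nat.modEq_one_of_pow_prime_modEq_one {p s : ℕ} (hp : p.Prime) (hs : s ^ p ≡ 1 [MOD p]) :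
    s ≡ 1 [MOD p] := by
  have : Fact p.Prime := ⟨hp⟩
  rw [← ZMod.natCast_eq_natCast_iff] at hs ⊢
  simpa [ZMod.pow_card] using hs

section Conjugation

variable {G X : Type*} [Group G] [MulAction G X] {σ n : G} {s : ℕ}

theorem pow_mul_eq_pow_pow_mul (h : σ * n = n ^ s * σ) (j : ℕ) :
    σ ^ j * n = n ^ s ^ j * σ ^ j := by
  induction j with
  | zero => simp
  | succ j ih =>
    rw [pow_succ', pow_succ', pow_mul]
    exact SemiconjBy.mul_left (SemiconjBy.pow_right h _) ih

theorem pow_smul_eq_pow_geom_sum_smul (h : σ * n = n ^ s * σ) {x : X} (hx : σ • x = n • x)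
    (j : ℕ) : σ ^ j • x = n ^ (∑ i ∈ range j, s ^ i) • x := by
  induction j with
  | zero => simp
  | succ j ih =>
    rw [pow_succ, mul_smul, hx, smul_smul, pow_mul_eq_pow_pow_mul h, mul_smul, ih, smul_smul,
      ← pow_add, sum_range_succ, add_comm]

theorem pow_prime_smul_eq_self_of_semiconj {p : ℕ} (hp : p.Prime) (hodd : Odd p)
    (hn : orderOf n = p ^ 2) (h : σ * n = n ^ s * σ) (hσ : σ ^ p = 1) {x : X}
    (hx : σ • x = n • x) : n ^ p • x = x := by
  have hs : s ^ p ≡ 1 [MOD p ^ 2] := by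
    have hconj := pow_mul_eq_pow_pow_mul h p
    rw [hσ, one_mul, mul_one] at hconj
    rw [← hn, ← pow_eq_pow_iff_modEq, pow_one, ← hconj]
  have hgeom : ∑ i ∈ range p, s ^ i ≡ p [MOD orderOf n] := hn ▸
    Nat.geom_sum_modEq_of_modEq_one hodd
      (Nat.modEq_one_of_pow_prime_modEq_one hp (hs.of_dvd (dvd_pow_self p two_ne_zero)))
  calc n ^ p • x = n ^ (∑ i ∈ range p, s ^ i) • x := by rw [pow_eq_pow_iff_modEq.mpr hgeom]
    _ = σ ^ p • x := (pow_smul_eq_pow_geom_sum_smul h hx p).symm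
    _ = x := by rw [hσ, one_smul]

end Conjugation

theorem pow_prime_eq_one_of_orderOf_eq_prime_pow {G : Type*} [Group G] {p k : ℕ} (hp : p.Prime)
    {g : G} (hg : orderOf g = p ^ k) (hsq : ∀ m, orderOf (g ^ m) ≠ p ^ 2) : g ^ p = 1 := by
  rw [← orderOf_dvd_iff_pow_eq_one, hg]
  by_contra hndvd
  have hk : 2 ≤ k := by
    by_contra! hk
    exact hndvd (by simpa using pow_dvd_pow p (Nat.le_of_lt_succ hk))
  exact hsq _ (orderOf_pow_orderOf_div (hg ▸ pow_ne_zero k hp.ne_zero) (hg ▸ pow_dvd_pow p hk))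

theorem Sylow.isPretransitive_of_card_eq_prime_pow {G X : Type*} [Group G] [Finite G]
    [MulAction G X] [IsPretransitive G X] [Finite X] {p k : ℕ} [hp : Fact p.Prime]
    (hX : Nat.card X = p ^ k) (P : Sylow p G) : IsPretransitive P X := by
  obtain ⟨x⟩ : Nonempty X := (Nat.card_pos_iff.mp (hX ▸ pow_pos hp.out.pos k)).1
  set S := stabilizer G x
  have horbit : (orbit P x).ncard = S.relIndex P := by
    rw [← index_stabilizer]; rfl
  have hdvd : p ^ k ∣ S.relIndex P := by
    -- factor `[G : S ⊓ P]` through `S`, of index `p ^ k`, and through `P`, of index prime to `p`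
    have hinf : S.relIndex P * (P : Subgroup G).index = (S ⊓ P).relIndex S * p ^ k := by
      rw [← hX, ← index_stabilizer_of_transitive G x, ← Subgroup.inf_relIndex_right,
        Subgroup.relIndex_mul_index inf_le_right, Subgroup.relIndex_mul_index inf_le_left]
    have hcop : (p ^ k).Coprime (P : Subgroup G).index :=
      .pow_left k ((hp.out.coprime_iff_not_dvd).mpr P.not_dvd_index)
    exact hcop.dvd_of_dvd_mul_right (hinf ▸ dvd_mul_left _ _)
  rw [isPretransitive_iff_orbit_eq_univ x]
  apply Set.eq_of_subset_of_ncard_le (Set.subset_univ _)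
  rw [Set.ncard_univ, hX]
  exact Nat.le_of_dvd ((Set.ncard_pos (Set.toFinite _)).mpr ⟨x, mem_orbit_self x⟩) (horbit ▸ hdvd)

theorem IsRegularSubgroup.eq_one_of_apply_eq {X : Type*} [Finite X]
    {N : Subgroup (Equiv.Perm X)} (hN : IsRegularSubgroup N) {m : Equiv.Perm X} (hm : m ∈ N)
    {x : X} (hx : m x = x) : m = 1 := by
  have hbij : Function.Bijective (fun m : N ↦ (m : Equiv.Perm X) x) :=
    (Nat.bijective_iff_surjective_and_card _).mpr
      ⟨fun y ↦ (hN.1 x y).elim fun m hm ↦ ⟨⟨m, hm.1⟩, hm.2⟩, hN.2⟩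
  simpa using congrArg Subtype.val (hbij.1 (a₁ := ⟨m, hm⟩) (a₂ := 1) hx)

/-- Let `p` be an odd prime, `|X| = p²`, and `N` a regular subgroup of `Sym(X)`
which is cyclic of order `p²`.  Every transitive subgroup of the normalizer of `N`
in `Sym(X)` (i.e. of the holomorph of `C_{p²}`) contains an element of order `p²`. -/
theorem stmt_1 {p : ℕ} (hp : p.Prime) (hodd : Odd p)
    {X : Type*} [Finite X] (hX : Nat.card X = p ^ 2)
    (N : Subgroup (Equiv.Perm X)) (hreg : IsRegularSubgroup N)
    (hcyc : IsCyclic ↥N) (hcard : Nat.card ↥N = p ^ 2)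
    (H : Subgroup (Equiv.Perm X)) (hHN : H ≤ Subgroup.normalizer (N : Set (Equiv.Perm X)))
    (hHtrans : ∀ x y : X, ∃ h ∈ H, h x = y) :
    ∃ h ∈ H, orderOf h = p ^ 2 := by
  have : Fact p.Prime := ⟨hp⟩
  by_contra! hH
  obtain ⟨n, rfl⟩ := N.isCyclic_iff_exists_zpowers_eq_top.mp hcyc
  have hn : orderOf n = p ^ 2 := Nat.card_zpowers n ▸ hcard
  obtain ⟨x⟩ : Nonempty X := (Nat.card_pos_iff.mp (hX ▸ pow_pos hp.pos 2)).1
  have : IsPretransitive H X :=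
    ⟨fun x y ↦ (hHtrans x y).elim fun h hh ↦ ⟨⟨h, hh.1⟩, hh.2⟩⟩
  let P : Sylow p H := default
  have := Sylow.isPretransitive_of_card_eq_prime_pow hX P
  obtain ⟨σ, hσx⟩ := exists_smul_eq P x (n x)
  set τ : Equiv.Perm X := ((σ : H) : Equiv.Perm X)
  have hτH : τ ∈ H := (σ : H).2
  have hτp : τ ^ p = 1 := by
    obtain ⟨k, hk⟩ := IsPGroup.iff_orderOf.mp P.isPGroup' σ
    refine pow_prime_eq_one_of_orderOf_eq_prime_pow hp (k := k) ?_ fun m ↦ hH _ (pow_mem hτH m)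
    simpa [τ, Subgroup.orderOf_coe] using hk
  obtain ⟨s, hs⟩ : ∃ s : ℕ, n ^ s = τ * n * τ⁻¹ :=
    (Submonoid.mem_powers_iff _ _).mp <| mem_powers_iff_mem_zpowers.mpr <|
      (Subgroup.mem_normalizer_iff.mp (hHN hτH) n).mp (Subgroup.mem_zpowers n)
  have hfix : (n ^ p) x = x :=
    pow_prime_smul_eq_self_of_semiconj hp hodd hn (eq_mul_inv_iff_mul_eq.mp hs).symm hτp hσx
  have hdvd : orderOf n ∣ p :=
    orderOf_dvd_of_pow_eq_one (hreg.eq_one_of_apply_eq (pow_mem (Subgroup.mem_zpowers n) p) hfix)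
  rw [hn] at hdvd
  nlinarith [Nat.le_of_dvd hp.pos hdvd, hp.two_le]
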